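/- arXiv:2405.04284 — 2 statements merged into one kernel-verified Lean document; each statement's English description precedes it below -/
import Mathlib

section
/- If ν is a quasi-stationary distribution of a subcritical Galton–Watson process with mean m ∈ (0,1), then there exists α ∈ (0,∞) such that P_ν(N_n > 0) = m^{αn} for all n ∈ ℕ. -/
open MeasureTheory Filter Topology

noncomputable def genFun (p : ℕ → ℝ) (s : ℝ) : ℝ := ∑' j, p j * s ^ j

noncomputable def genFunIter (p : ℕ → ℝ) : ℕ → ℝ → ℝ
  | 0, s => s
  | n + 1, s => genFun p (genFunIter p n s)

/-!
Let `G` be the generating function of `ν`, `f_n` the `n`-th iterate of that of `p`, and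
`q_n = P_ν(N_n = 0) = G(f_n(0))`. Summing the quasi-stationarity relation against `s^j` gives
`G(f_n(s)) = q_n + (1 - q_n) G(s)`. Taking `s = f_1(0)` yields
`1 - q_{n+1} = (1 - q_n)(1 - q_1)`, so `P_ν(N_n > 0) = θ^n` with `θ = 1 - q_1`. Finally
`0 < θ < 1`: `θ = 0` would force `ν = 0`, and `θ < 1` because `p 0 > 0` when `m < 1`.
Hence `α = log_m θ`.
-/

open Set

lemma summable_of_tsum_ne_zero {ι : Type*} {w : ι → ℝ} (h : ∑' j, w j ≠ 0) : Summable w :=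
  not_imp_comm.1 tsum_eq_zero_of_not_summable h

lemma summable_of_tsum_eq_one {ι : Type*} {w : ι → ℝ} (h : ∑' j, w j = 1) : Summable w :=
  summable_of_tsum_ne_zero (h ▸ one_ne_zero)

lemma summable_mul_pow {w : ℕ → ℝ} (hw : ∀ j, 0 ≤ w j) (hws : Summable w) {t : ℝ}
    (ht : t ∈ Icc (0 : ℝ) 1) : Summable fun j => w j * t ^ j :=
  hws.of_nonneg_of_le (fun j => mul_nonneg (hw j) (pow_nonneg ht.1 j))
    (fun j => mul_le_of_le_one_right (hw j) (pow_le_one₀ ht.1 ht.2))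

lemma genFun_zero (w : ℕ → ℝ) : genFun w 0 = w 0 := by
  rw [genFun, tsum_eq_single 0 fun j hj => by simp [zero_pow hj]]
  simp

lemma genFun_mem_Icc {w : ℕ → ℝ} (hw : ∀ j, 0 ≤ w j) (hw1 : ∑' j, w j = 1) {t : ℝ}
    (ht : t ∈ Icc (0 : ℝ) 1) : genFun w t ∈ Icc (0 : ℝ) 1 := by
  refine ⟨tsum_nonneg fun j => mul_nonneg (hw j) (pow_nonneg ht.1 j), hw1 ▸ ?_⟩
  exact (summable_mul_pow hw (summable_of_tsum_eq_one hw1) ht).tsum_le_tsum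
    (fun j => mul_le_of_le_one_right (hw j) (pow_le_one₀ ht.1 ht.2))
    (summable_of_tsum_eq_one hw1)

lemma genFun_pos {w : ℕ → ℝ} (hw : ∀ j, 0 ≤ w j) (hw1 : ∑' j, w j = 1) {t : ℝ}
    (ht : t ∈ Ioc (0 : ℝ) 1) : 0 < genFun w t := by
  obtain ⟨k, hk⟩ : ∃ k, 0 < w k := by
    by_contra! h
    linarith [(tsum_nonpos h : ∑' j, w j ≤ 0)]
  exact (summable_mul_pow hw (summable_of_tsum_eq_one hw1) (Ioc_subset_Icc_self ht)).tsum_pos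
    (fun j => mul_nonneg (hw j) (pow_nonneg ht.1.le j)) k (mul_pos hk (pow_pos ht.1 k))

lemma genFunIter_succ' (p : ℕ → ℝ) (n : ℕ) (s : ℝ) :
    genFunIter p (n + 1) s = genFunIter p n (genFun p s) := by
  induction n with
  | zero => rfl
  | succ n ih => exact congrArg (genFun p) ih

lemma genFunIter_mem_Icc {p : ℕ → ℝ} (hp : ∀ j, 0 ≤ p j) (hp1 : ∑' j, p j = 1) (n : ℕ)
    {s : ℝ} (hs : s ∈ Icc (0 : ℝ) 1) : genFunIter p n s ∈ Icc (0 : ℝ) 1 := by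
  induction n with
  | zero => exact hs
  | succ n ih => exact genFun_mem_Icc hp hp1 ih

lemma apply_zero_pos_of_tsum_natCast_mul_lt_one {p : ℕ → ℝ} (hp : ∀ j, 0 ≤ p j)
    (hp1 : ∑' j, p j = 1) (hmean : Summable fun j : ℕ => (j : ℝ) * p j)
    (hlt : ∑' j : ℕ, (j : ℝ) * p j < 1) : 0 < p 0 := by
  by_contra! h0
  have hle : ∀ j : ℕ, p j ≤ j * p j := by
    rintro (_ | j)
    · simpa using h0
    · exact le_mul_of_one_le_left (hp _) (by simp)
  linarith [(summable_of_tsum_eq_one hp1).tsum_le_tsum hle hmean]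

lemma tsum_mixture_mul_pow {ν : ℕ → ℝ} {L : ℕ → ℕ → ℝ} {g s : ℝ} (hν : ∀ k, 0 ≤ ν k)
    (hνs : Summable ν) (hL : ∀ k j, 0 ≤ L k j) (hLs : ∀ k, Summable (L k))
    (hs : s ∈ Icc (0 : ℝ) 1) (hg : g ∈ Icc (0 : ℝ) 1)
    (hgf : ∀ k, ∑' j, L k j * s ^ j = g ^ k) :
    ∑' j, (∑' k, ν k * L k j) * s ^ j = genFun ν g := by
  have hsum : Summable (Function.uncurry fun k j => ν k * (L k j * s ^ j)) := by
    refine (summable_prod_of_nonneg fun _ => mul_nonneg (hν _)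
      (mul_nonneg (hL _ _) (pow_nonneg hs.1 _))).2 ⟨fun k => ?_, ?_⟩
    · exact (summable_mul_pow (hL k) (hLs k) hs).mul_left (ν k)
    · simpa only [tsum_mul_left, hgf] using summable_mul_pow hν hνs hg
  calc ∑' j, (∑' k, ν k * L k j) * s ^ j = ∑' j, ∑' k, ν k * (L k j * s ^ j) := by
        simp only [← tsum_mul_right, mul_assoc]
    _ = ∑' k, ν k * ∑' j, L k j * s ^ j := by simp only [hsum.tsum_comm, tsum_mul_left]
    _ = genFun ν g := by simp only [hgf, genFun]

lemma ne_zero_of_forall_div_eq {a ν : ℕ → ℝ} {c : ℝ} (hν0 : ν 0 = 0) (hν1 : ∑' j, ν j = 1)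
    (h : ∀ j, 1 ≤ j → a j / c = ν j) : c ≠ 0 := by
  rintro rfl
  have hν : ∀ j, ν j = 0 := by
    rintro (_ | j)
    · exact hν0
    · simpa using (h (j + 1) j.succ_pos).symm
  simp [hν] at hν1

lemma tsum_mul_pow_of_forall_eq_mul {a ν : ℕ → ℝ} {c s : ℝ} (hν0 : ν 0 = 0)
    (hνs : Summable fun j => ν j * s ^ j) (ha : ∀ j, 1 ≤ j → a j = ν j * c) :
    ∑' j, a j * s ^ j = a 0 + genFun ν s * c := by
  have hsplit :
      (fun j => a j * s ^ j) = fun j => (if j = 0 then a 0 else 0) + ν j * s ^ j * c := by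
    ext (_ | j)
    · simp [hν0]
    · simp [ha (j + 1) j.succ_pos, mul_right_comm]
  rw [hsplit, Summable.tsum_add (summable_of_ne_finset_zero (s := {0}) (by simp_all))
    (hνs.mul_right c), tsum_ite_eq, tsum_mul_right, genFun]

lemma exists_pos_pow_eq_rpow {m θ : ℝ} (hm0 : 0 < m) (hm1 : m < 1) (hθ0 : 0 < θ) (hθ1 : θ < 1) :
    ∃ α : ℝ, 0 < α ∧ ∀ n : ℕ, θ ^ n = m ^ (α * n) :=
  ⟨Real.logb m θ, Real.logb_pos_of_base_lt_one hm0 hm1 hθ0 hθ1, fun n => by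
    rw [Real.rpow_mul_natCast hm0.le, Real.rpow_logb hm0 hm1.ne hθ0]⟩

/-- `law k n j` is `P_k(N_n = j)`, pinned down by `∑_j law k n j s^j = f_n(s)^k`, and
`P_ν(N_n = j) = ∑_k ν(k) law k n j`. -/
theorem stmt1 (p ν : ℕ → ℝ) (m : ℝ)
    (hp_nonneg : ∀ j, 0 ≤ p j) (hp_sum : ∑' j, p j = 1)
    (hm : m = ∑' j : ℕ, (j : ℝ) * p j) (hm_pos : 0 < m) (hm_lt : m < 1)
    (hν_nonneg : ∀ j, 0 ≤ ν j) (hν_zero : ν 0 = 0) (hν_sum : ∑' j, ν j = 1)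
    (law : ℕ → ℕ → ℕ → ℝ)
    (hlaw_nonneg : ∀ k n j, 0 ≤ law k n j)
    (hlaw_sum : ∀ k n, ∑' j, law k n j = 1)
    (hlaw_gf : ∀ k n, ∀ s ∈ Set.Icc (0 : ℝ) 1,
        ∑' j, law k n j * s ^ j = genFunIter p n s ^ k)
    (hQSD : ∀ n : ℕ, ∀ j : ℕ, 1 ≤ j →
      (∑' k, ν k * law k n j) / (1 - ∑' k, ν k * law k n 0) = ν j) :
    ∃ α : ℝ, 0 < α ∧ ∀ n : ℕ,
      1 - (∑' k, ν k * law k n 0) = m ^ (α * (n : ℝ)) := by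
  set q : ℕ → ℝ := fun n => ∑' k, ν k * law k n 0
  have hνs := summable_of_tsum_eq_one hν_sum
  have h0 : (0 : ℝ) ∈ Icc (0 : ℝ) 1 := left_mem_Icc.2 zero_le_one
  have hgf : ∀ n, ∀ s ∈ Icc (0 : ℝ) 1,
      ∑' j, (∑' k, ν k * law k n j) * s ^ j = genFun ν (genFunIter p n s) := fun n s hs =>
    tsum_mixture_mul_pow hν_nonneg hνs (hlaw_nonneg · n) (summable_of_tsum_eq_one <| hlaw_sum · n)
      hs (genFunIter_mem_Icc hp_nonneg hp_sum n hs) (hlaw_gf · n s hs)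
  have hq : ∀ n, q n = genFun ν (genFunIter p n 0) := fun n => by
    rw [← hgf n 0 h0]
    exact (genFun_zero fun j => ∑' k, ν k * law k n j).symm
  have hmix : ∀ n, ∀ s ∈ Icc (0 : ℝ) 1,
      genFun ν (genFunIter p n s) = q n + genFun ν s * (1 - q n) := fun n s hs => by
    rw [← hgf n s hs]
    refine tsum_mul_pow_of_forall_eq_mul hν_zero (summable_mul_pow hν_nonneg hνs hs) fun j hj => ?_
    exact (div_eq_iff (ne_zero_of_forall_div_eq hν_zero hν_sum (hQSD n))).1 (hQSD n j hj)
  have hp0 : p 0 ∈ Icc (0 : ℝ) 1 := genFun_zero p ▸ genFun_mem_Icc hp_nonneg hp_sum h0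
  have hq1 : q 1 = genFun ν (p 0) := by rw [hq, ← genFun_zero p]; rfl
  have hgeom : ∀ n, 1 - q n = (1 - q 1) ^ n := by
    intro n
    induction n with
    | zero => simp [hq, genFunIter, genFun_zero, hν_zero]
    | succ n ih =>
      rw [pow_succ, ← ih, hq (n + 1), genFunIter_succ', genFun_zero, hmix n _ hp0, ← hq1]
      ring
  have hθ0 : 0 < 1 - q 1 := lt_of_le_of_ne
    (sub_nonneg.2 (hq1 ▸ genFun_mem_Icc hν_nonneg hν_sum hp0).2)
    (ne_zero_of_forall_div_eq hν_zero hν_sum (hQSD 1)).symm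
  have hθ1 : 1 - q 1 < 1 := by
    have hpos := apply_zero_pos_of_tsum_natCast_mul_lt_one hp_nonneg hp_sum
      (summable_of_tsum_ne_zero (hm ▸ hm_pos.ne')) (hm ▸ hm_lt)
    linarith [hq1 ▸ genFun_pos hν_nonneg hν_sum ⟨hpos, hp0.2⟩]
  obtain ⟨α, hα, hpow⟩ := exists_pos_pow_eq_rpow hm_pos hm_lt hθ0 hθ1
  exact ⟨α, hα, fun n => (hgeom n).trans (hpow n)⟩
end

section
/- For a subcritical Galton–Watson process with mean m ∈ (0,1), the sequence (1 − f_n(s))/(m^n (1 − s)) is monotone decreasing in n for each s ∈ [0,1), and converges as n → ∞ to a limit φ(s) ∈ [0,1], where φ is non-decreasing in s. -/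
open MeasureTheory Filter Topology

/-!
Write `1 - f(t) = (1 - t) G(t)` with `G(t) = ∑ⱼ pⱼ (1 + t + ⋯ + t^{j-1})`. On `[0,1]` the
function `G` is non-negative, non-decreasing and bounded by `G(1) = m`. Iterating the identity,
`(1 - fₙ(s)) / (mⁿ (1 - s)) = ∏_{k<n} G(f_k(s)) / m`, a product of factors in `[0,1]` which are
non-decreasing in `s` because each `f_k` is. Hence the partial products decrease in `n` to their
infimum `φ(s) ∈ [0,1]`, and `φ` inherits the monotonicity in `s`.
-/

open Finset

/-- The slope `(1 - f(t)) / (1 - t)` of the generating function, as a power series. -/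
noncomputable def genFunSlope (p : ℕ → ℝ) (t : ℝ) : ℝ := ∑' j, p j * ∑ i ∈ range j, t ^ i

section ProductsInUnitInterval

variable {u : ℕ → ℝ}

lemma antitone_prod_range_of_mem_Icc (hu : ∀ k, u k ∈ Set.Icc 0 1) :
    Antitone fun n => ∏ k ∈ range n, u k :=
  (prod_anti_set_of_le_one (fun k => (hu k).1) fun k => (hu k).2).comp_monotone range_mono

lemma prod_range_mem_Icc (hu : ∀ k, u k ∈ Set.Icc 0 1) (n : ℕ) :
    ∏ k ∈ range n, u k ∈ Set.Icc 0 1 :=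
  ⟨prod_nonneg fun k _ => (hu k).1, prod_le_one (fun k _ => (hu k).1) fun k _ => (hu k).2⟩

lemma bddBelow_range_prod_range (hu : ∀ k, u k ∈ Set.Icc 0 1) :
    BddBelow (Set.range fun n => ∏ k ∈ Finset.range n, u k) :=
  ⟨0, by rintro _ ⟨n, rfl⟩; exact (prod_range_mem_Icc hu n).1⟩

lemma iInf_prod_range_mem_Icc (hu : ∀ k, u k ∈ Set.Icc 0 1) :
    ⨅ n, ∏ k ∈ range n, u k ∈ Set.Icc 0 1 :=
  ⟨le_ciInf fun n => (prod_range_mem_Icc hu n).1,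
    (ciInf_le (bddBelow_range_prod_range hu) 0).trans_eq (prod_range_zero u)⟩

end ProductsInUnitInterval

section GeneratingFunction

variable {p : ℕ → ℝ}

lemma summable_of_tsum_eq_one_s4 (hp_sum : ∑' j, p j = 1) : Summable p := by
  by_contra hp
  rw [tsum_eq_zero_of_not_summable hp] at hp_sum
  exact zero_ne_one hp_sum

lemma geom_sum_le_of_mem_Icc {t : ℝ} (ht : t ∈ Set.Icc 0 1) (j : ℕ) :
    ∑ i ∈ range j, t ^ i ≤ j := by
  simpa using sum_le_sum fun i (_ : i ∈ range j) => pow_le_one₀ ht.1 ht.2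

lemma summable_genFun_terms (hp_nonneg : ∀ j, 0 ≤ p j) (hp_sum : ∑' j, p j = 1)
    {t : ℝ} (ht : t ∈ Set.Icc 0 1) : Summable fun j => p j * t ^ j :=
  (summable_of_tsum_eq_one_s4 hp_sum).of_nonneg_of_le
    (fun j => mul_nonneg (hp_nonneg j) (pow_nonneg ht.1 j))
    fun j => mul_le_of_le_one_right (hp_nonneg j) (pow_le_one₀ ht.1 ht.2)

lemma summable_genFunSlope_terms (hp_nonneg : ∀ j, 0 ≤ p j)
    (hm_summable : Summable fun j : ℕ => (j : ℝ) * p j) {t : ℝ} (ht : t ∈ Set.Icc 0 1) :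
    Summable fun j => p j * ∑ i ∈ range j, t ^ i :=
  hm_summable.of_nonneg_of_le
    (fun j => mul_nonneg (hp_nonneg j) (sum_nonneg fun i _ => pow_nonneg ht.1 i))
    fun j => (mul_le_mul_of_nonneg_left (geom_sum_le_of_mem_Icc ht j) (hp_nonneg j)).trans_eq
      (mul_comm _ _)

lemma one_sub_genFun (hp_nonneg : ∀ j, 0 ≤ p j) (hp_sum : ∑' j, p j = 1)
    {t : ℝ} (ht : t ∈ Set.Icc 0 1) : 1 - genFun p t = (1 - t) * genFunSlope p t := by
  have hsub : 1 - genFun p t = ∑' j, (p j - p j * t ^ j) := by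
    rw [genFun, ← hp_sum,
      (summable_of_tsum_eq_one_s4 hp_sum).tsum_sub (summable_genFun_terms hp_nonneg hp_sum ht)]
  rw [hsub, genFunSlope, ← tsum_mul_left]
  exact tsum_congr fun j => by rw [mul_left_comm, mul_neg_geom_sum]; ring

lemma genFunSlope_nonneg (hp_nonneg : ∀ j, 0 ≤ p j) {t : ℝ} (ht : 0 ≤ t) :
    0 ≤ genFunSlope p t :=
  tsum_nonneg fun j => mul_nonneg (hp_nonneg j) (sum_nonneg fun i _ => pow_nonneg ht i)

lemma genFunSlope_le_tsum_mul (hp_nonneg : ∀ j, 0 ≤ p j)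
    (hm_summable : Summable fun j : ℕ => (j : ℝ) * p j) {t : ℝ} (ht : t ∈ Set.Icc 0 1) :
    genFunSlope p t ≤ ∑' j : ℕ, (j : ℝ) * p j :=
  (summable_genFunSlope_terms hp_nonneg hm_summable ht).tsum_le_tsum
    (fun j => (mul_le_mul_of_nonneg_left (geom_sum_le_of_mem_Icc ht j) (hp_nonneg j)).trans_eq
      (mul_comm _ _)) hm_summable

lemma genFunSlope_monotoneOn (hp_nonneg : ∀ j, 0 ≤ p j)
    (hm_summable : Summable fun j : ℕ => (j : ℝ) * p j) :
    MonotoneOn (genFunSlope p) (Set.Icc 0 1) := fun _ ha _ hb hab =>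
  (summable_genFunSlope_terms hp_nonneg hm_summable ha).tsum_le_tsum
    (fun j => mul_le_mul_of_nonneg_left
      (sum_le_sum fun i _ => pow_le_pow_left₀ ha.1 hab i) (hp_nonneg j))
    (summable_genFunSlope_terms hp_nonneg hm_summable hb)

lemma genFun_mapsTo (hp_nonneg : ∀ j, 0 ≤ p j) (hp_sum : ∑' j, p j = 1) :
    Set.MapsTo (genFun p) (Set.Icc 0 1) (Set.Icc 0 1) := fun t ht => by
  have h := one_sub_genFun hp_nonneg hp_sum ht
  have := mul_nonneg (sub_nonneg.2 ht.2) (genFunSlope_nonneg hp_nonneg ht.1)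
  exact ⟨tsum_nonneg fun j => mul_nonneg (hp_nonneg j) (pow_nonneg ht.1 j), by linarith⟩

lemma genFun_monotoneOn (hp_nonneg : ∀ j, 0 ≤ p j) (hp_sum : ∑' j, p j = 1) :
    MonotoneOn (genFun p) (Set.Icc 0 1) := fun _ ha _ hb hab =>
  (summable_genFun_terms hp_nonneg hp_sum ha).tsum_le_tsum
    (fun j => mul_le_mul_of_nonneg_left (pow_le_pow_left₀ ha.1 hab j) (hp_nonneg j))
    (summable_genFun_terms hp_nonneg hp_sum hb)

lemma genFunIter_eq_iterate (n : ℕ) : genFunIter p n = (genFun p)^[n] := by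
  induction n with
  | zero => rfl
  | succ n ih => funext s; rw [Function.iterate_succ_apply', ← ih]; rfl

lemma genFunIter_mapsTo (hp_nonneg : ∀ j, 0 ≤ p j) (hp_sum : ∑' j, p j = 1) (n : ℕ) :
    Set.MapsTo (genFunIter p n) (Set.Icc 0 1) (Set.Icc 0 1) :=
  genFunIter_eq_iterate n ▸ (genFun_mapsTo hp_nonneg hp_sum).iterate n

lemma genFunIter_monotoneOn (hp_nonneg : ∀ j, 0 ≤ p j) (hp_sum : ∑' j, p j = 1) (n : ℕ) :
    MonotoneOn (genFunIter p n) (Set.Icc 0 1) := by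
  induction n with
  | zero => exact monotone_id.monotoneOn _
  | succ n ih =>
    exact (genFun_monotoneOn hp_nonneg hp_sum).comp ih (genFunIter_mapsTo hp_nonneg hp_sum n)

lemma one_sub_genFunIter (hp_nonneg : ∀ j, 0 ≤ p j) (hp_sum : ∑' j, p j = 1)
    {s : ℝ} (hs : s ∈ Set.Icc 0 1) (n : ℕ) :
    1 - genFunIter p n s = (1 - s) * ∏ k ∈ range n, genFunSlope p (genFunIter p k s) := by
  induction n with
  | zero => simp [genFunIter]
  | succ n ih =>
    rw [prod_range_succ, ← mul_assoc, ← ih]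
    exact one_sub_genFun hp_nonneg hp_sum (genFunIter_mapsTo hp_nonneg hp_sum n hs)

lemma one_sub_genFunIter_div_eq_prod (hp_nonneg : ∀ j, 0 ≤ p j) (hp_sum : ∑' j, p j = 1)
    {m : ℝ} (hm : m ≠ 0) {s : ℝ} (hs : s ∈ Set.Ico 0 1) (n : ℕ) :
    (1 - genFunIter p n s) / (m ^ n * (1 - s)) =
      ∏ k ∈ range n, genFunSlope p (genFunIter p k s) / m := by
  rw [one_sub_genFunIter hp_nonneg hp_sum (Set.Ico_subset_Icc_self hs), prod_div_distrib,
    prod_const, card_range]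
  field_simp [(sub_pos.2 hs.2).ne']

end GeneratingFunction

theorem stmt4_general (p : ℕ → ℝ) (m : ℝ)
    (hp_nonneg : ∀ j, 0 ≤ p j) (hp_sum : ∑' j, p j = 1)
    (hm : m = ∑' j : ℕ, (j : ℝ) * p j)
    (hm_summable : Summable fun j : ℕ => (j : ℝ) * p j)
    (hm_pos : 0 < m) :
    ∃ φ : ℝ → ℝ, MonotoneOn φ (Set.Ico 0 1) ∧
      ∀ s ∈ Set.Ico (0 : ℝ) 1,
        (Antitone fun n : ℕ => (1 - genFunIter p n s) / (m ^ n * (1 - s))) ∧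
        Tendsto (fun n : ℕ => (1 - genFunIter p n s) / (m ^ n * (1 - s)))
          atTop (𝓝 (φ s)) ∧ φ s ∈ Set.Icc (0 : ℝ) 1 := by
  set u : ℝ → ℕ → ℝ := fun s k => genFunSlope p (genFunIter p k s) / m
  have hu_mem : ∀ s ∈ Set.Ico (0 : ℝ) 1, ∀ k, u s k ∈ Set.Icc 0 1 := fun s hs k => by
    have ht := genFunIter_mapsTo hp_nonneg hp_sum k (Set.Ico_subset_Icc_self hs)
    exact ⟨div_nonneg (genFunSlope_nonneg hp_nonneg ht.1) hm_pos.le,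
      (div_le_one hm_pos).2 (hm ▸ genFunSlope_le_tsum_mul hp_nonneg hm_summable ht)⟩
  have hu_mono : ∀ k, MonotoneOn (u · k) (Set.Ico 0 1) := fun k _ ha _ hb hab =>
    div_le_div_of_nonneg_right (((genFunSlope_monotoneOn hp_nonneg hm_summable).comp
      (genFunIter_monotoneOn hp_nonneg hp_sum k) (genFunIter_mapsTo hp_nonneg hp_sum k))
      (Set.Ico_subset_Icc_self ha) (Set.Ico_subset_Icc_self hb) hab) hm_pos.le
  refine ⟨fun s => ⨅ n, ∏ k ∈ range n, u s k, fun a ha b hb hab => ?_, fun s hs => ?_⟩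
  · exact ciInf_mono (bddBelow_range_prod_range (hu_mem a ha)) fun n =>
      prod_le_prod (fun k _ => (hu_mem a ha k).1) fun k _ => hu_mono k ha hb hab
  · simp only [one_sub_genFunIter_div_eq_prod hp_nonneg hp_sum hm_pos.ne' hs]
    exact ⟨antitone_prod_range_of_mem_Icc (hu_mem s hs),
      tendsto_atTop_ciInf (antitone_prod_range_of_mem_Icc (hu_mem s hs))
        (bddBelow_range_prod_range (hu_mem s hs)),
      iInf_prod_range_mem_Icc (hu_mem s hs)⟩

/-- for a subcritical GW-process with mean `m ∈ (0,1)` (and `p₀ < 1`),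
for each `s ∈ [0,1)` the sequence `(1 - f_n(s))/(m^n (1-s))` is monotone decreasing
in `n` and converges to a limit `φ(s) ∈ [0,1]`, and `φ` is non-decreasing on `[0,1)`. -/
theorem stmt4 (p : ℕ → ℝ) (m : ℝ)
    (hp_nonneg : ∀ j, 0 ≤ p j) (hp_sum : ∑' j, p j = 1) (hp0 : p 0 < 1)
    (hm : m = ∑' j : ℕ, (j : ℝ) * p j)
    (hm_summable : Summable fun j : ℕ => (j : ℝ) * p j)
    (hm_pos : 0 < m) (hm_lt : m < 1) :
    ∃ φ : ℝ → ℝ, MonotoneOn φ (Set.Ico 0 1) ∧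
      ∀ s ∈ Set.Ico (0 : ℝ) 1,
        (Antitone fun n : ℕ => (1 - genFunIter p n s) / (m ^ n * (1 - s))) ∧
        Tendsto (fun n : ℕ => (1 - genFunIter p n s) / (m ^ n * (1 - s)))
          atTop (𝓝 (φ s)) ∧ φ s ∈ Set.Icc (0 : ℝ) 1 :=
  stmt4_general p m hp_nonneg hp_sum hm hm_summable hm_pos
end
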